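/- arXiv:2007.10386 — 3 statements merged into one kernel-verified Lean document; each statement's English description precedes it below -/
import Mathlib

section
/- Let m ≥ 1 be an integer, 0 < q < 1, |ξ| < π/2, 0 ≤ ρ < 1 and 0 ≤ γ < 1. If [ (1-ρ) sec ξ + (1-γ) ] · m(m+1) q² / (1-q)² + [ 2(1-ρ) sec ξ + (1-γ)(4-ρ) ] · m q / (1-q) + (1-γ)(2-ρ) · ( 1 - (1-q)^m ) ≤ 1 - γ, then the Pascal distribution series Θ_q^m belongs to the class 𝒦(ξ, γ, ρ). -/
noncomputable section

open Complex Real Set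

/-- The open unit disk in the complex plane. -/
def unitDisk : Set ℂ := Metric.ball 0 1

/-- The class 𝒜 of normalized analytic functions on the unit disk:
`f` analytic on `𝔻`, `f 0 = 0`, `f' 0 = 1`. -/
def NormalizedAnalytic (f : ℂ → ℂ) : Prop :=
  AnalyticOn ℂ f unitDisk ∧ f 0 = 0 ∧ deriv f 0 = 1

/-- The spirallike class `𝒮(ξ, γ, ρ)`. -/
def SpiralS (ξ γ ρ : ℝ) (f : ℂ → ℂ) : Prop :=
  NormalizedAnalytic f ∧ Set.InjOn f unitDisk ∧
    ∀ z ∈ unitDisk, z ≠ 0 →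
      (1 - (ρ : ℂ)) * f z + (ρ : ℂ) * z * deriv f z ≠ 0 ∧
      γ * Real.cos ξ <
        (Complex.exp (Complex.I * ξ) * (z * deriv f z) /
          ((1 - (ρ : ℂ)) * f z + (ρ : ℂ) * z * deriv f z)).re

/-- The convex spirallike class `𝒦(ξ, γ, ρ)`. -/
def SpiralK (ξ γ ρ : ℝ) (f : ℂ → ℂ) : Prop :=
  NormalizedAnalytic f ∧ Set.InjOn f unitDisk ∧
    ∀ z ∈ unitDisk,
      deriv f z + (ρ : ℂ) * z * deriv (deriv f) z ≠ 0 ∧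
      γ * Real.cos ξ <
        (Complex.exp (Complex.I * ξ) * (z * deriv (deriv f) z + deriv f z) /
          (deriv f z + (ρ : ℂ) * z * deriv (deriv f) z)).re

/-- The spirallike class `𝒮(ξ, γ)`. -/
def SpiralS0 (ξ γ : ℝ) (f : ℂ → ℂ) : Prop :=
  NormalizedAnalytic f ∧ Set.InjOn f unitDisk ∧
    ∀ z ∈ unitDisk, z ≠ 0 →
      f z ≠ 0 ∧
      γ * Real.cos ξ <
        (Complex.exp (Complex.I * ξ) * (z * deriv f z) / f z).re

/-- The convex spirallike class `𝒦(ξ, γ)`. -/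
def SpiralK0 (ξ γ : ℝ) (f : ℂ → ℂ) : Prop :=
  NormalizedAnalytic f ∧ Set.InjOn f unitDisk ∧
    ∀ z ∈ unitDisk,
      deriv f z ≠ 0 ∧
      γ * Real.cos ξ <
        (Complex.exp (Complex.I * ξ) *
          (1 + z * deriv (deriv f) z / deriv f z)).re

/-- The class `ℛ^τ(ϑ, δ)`. -/
def ClassR (τ : ℂ) (ϑ δ : ℝ) (f : ℂ → ℂ) : Prop :=
  NormalizedAnalytic f ∧ Set.InjOn f unitDisk ∧
    ∀ z ∈ unitDisk,
      ‖
        (((1 - (ϑ : ℂ)) * (if z = 0 then 1 else f z / z) + (ϑ : ℂ) * deriv f z - 1) /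
          (2 * τ * (1 - (δ : ℂ)) +
            (1 - (ϑ : ℂ)) * (if z = 0 then 1 else f z / z) + (ϑ : ℂ) * deriv f z - 1))‖ < 1

/-- The Pascal distribution series
`Θ_q^m(z) = z + ∑_{n=2}^∞ C(n+m-2, m-1) q^(n-1) (1-q)^m z^n`. -/
def pascalTheta (m : ℕ) (q : ℝ) : ℂ → ℂ := fun z =>
  z + ∑' n : ℕ, ((n + m).choose (m - 1) : ℂ) * (q : ℂ) ^ (n + 1) * (1 - (q : ℂ)) ^ m * z ^ (n + 2)

/-- The integral operator `𝒢_q^m(z) = ∫_0^z Θ_q^m(t)/t dt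
= z + ∑_{n=2}^∞ C(n+m-2, m-1) q^(n-1) (1-q)^m z^n / n`. -/
def pascalG (m : ℕ) (q : ℝ) : ℂ → ℂ := fun z =>
  z + ∑' n : ℕ, ((n + m).choose (m - 1) : ℂ) * (q : ℂ) ^ (n + 1) * (1 - (q : ℂ)) ^ m *
    z ^ (n + 2) / ((n : ℂ) + 2)

/-!
On the unit disk the Pascal series has the closed form
`Θ(z) = z + (1-q)^m z ((1-qz)^{-m} - 1)`, so `Θ'` and `Θ''` are explicit, and `|1 - qz| ≥ 1 - q`
(together with the nonnegative binomial series of `(1-x)^{-m} - 1`) gives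
`|Θ'(z) - 1| ≤ A := 1 - (1-q)^m + mq/(1-q)` and `|z Θ''(z)| < B := m(m+1)q²/(1-q)² + 2mq/(1-q)`.
Since `(zΘ'' + Θ')/(Θ' + ρzΘ'') = 1 + (1-ρ) zΘ''/(Θ' + ρzΘ'')` and the denominator has modulus at
least `1 - A - ρB`, the real-part condition holds as soon as `(1-ρ)B ≤ (1-γ) cos ξ (1 - A - ρB)`,
which the hypothesis (multiplied by `cos ξ`) implies. Univalence follows from `|Θ' - 1| ≤ A < 1` by
the mean value inequality on the convex disk.
-/

theorem hasDerivAt_inv_one_sub_mul_pow {𝕜 : Type*} [NontriviallyNormedField 𝕜] (Q : 𝕜) {z : 𝕜}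
    (hz : 1 - Q * z ≠ 0) (k : ℕ) :
    HasDerivAt (fun w => ((1 - Q * w) ^ k)⁻¹) (k * Q * ((1 - Q * z) ^ (k + 1))⁻¹) z := by
  have h : HasDerivAt (fun w => (1 - Q * w) ^ k) (k * (1 - Q * z) ^ (k - 1) * -Q) z := by
    simpa using (((hasDerivAt_id z).const_mul Q).const_sub 1).fun_pow k
  refine (h.fun_inv (pow_ne_zero k hz)).congr_deriv ?_
  rcases k with _ | k
  · simp
  · rw [Nat.add_sub_cancel]
    field_simp
    ring

section General

variable {𝕜 : Type*} [RCLike 𝕜]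

theorem hasSum_choose_mul_pow_succ {m : ℕ} (hm : 1 ≤ m) {x : 𝕜} (hx : ‖x‖ < 1) :
    HasSum (fun n : ℕ => ((n + m).choose (m - 1) : 𝕜) * x ^ (n + 1)) (((1 - x) ^ m)⁻¹ - 1) := by
  obtain ⟨k, rfl⟩ := Nat.exists_eq_add_of_le' hm
  have h := hasSum_choose_mul_geometric_of_norm_lt_one k hx
  rw [← hasSum_nat_add_iff' 1] at h
  have hterm : (fun n : ℕ => ((n + (k + 1)).choose (k + 1 - 1) : 𝕜) * x ^ (n + 1))
      = fun n => ((n + 1 + k).choose k : 𝕜) * x ^ (n + 1) := by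
    funext n
    rw [Nat.add_sub_cancel, add_assoc, add_comm 1 k]
  have hval : ((1 - x) ^ (k + 1))⁻¹ - 1
      = 1 / (1 - x) ^ (k + 1) - ∑ i ∈ Finset.range 1, ((i + k).choose k : 𝕜) * x ^ i := by
    simp
  rw [hterm, hval]
  exact h

theorem norm_inv_one_sub_pow_sub_one_le {m : ℕ} (hm : 1 ≤ m) {x : 𝕜} {r : ℝ} (hxr : ‖x‖ ≤ r)
    (hr : r < 1) : ‖((1 - x) ^ m)⁻¹ - 1‖ ≤ ((1 - r) ^ m)⁻¹ - 1 := by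
  have hr0 : 0 ≤ r := (norm_nonneg x).trans hxr
  refine (hasSum_choose_mul_pow_succ hm (hxr.trans_lt hr)).norm_le_of_bounded
    (hasSum_choose_mul_pow_succ (𝕜 := ℝ) hm (by rwa [Real.norm_of_nonneg hr0])) fun n => ?_
  rw [norm_mul, norm_pow, RCLike.norm_natCast]
  gcongr

theorem norm_inv_one_sub_pow_le {x : 𝕜} {r : ℝ} (hxr : ‖x‖ ≤ r) (hr : r < 1) (k : ℕ) :
    ‖((1 - x) ^ k)⁻¹‖ ≤ ((1 - r) ^ k)⁻¹ := by
  have h : 1 - r ≤ ‖1 - x‖ := by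
    have := norm_sub_norm_le (1 : 𝕜) x
    rw [norm_one] at this
    linarith
  rw [norm_inv, norm_pow]
  exact inv_anti₀ (pow_pos (by linarith) k) (pow_le_pow_left₀ (by linarith) h k)

theorem Convex.injOn_of_norm_deriv_sub_one_le {s : Set 𝕜} (hs : Convex ℝ s) {f : 𝕜 → 𝕜}
    (hf : ∀ z ∈ s, DifferentiableAt 𝕜 f z) {C : ℝ} (hC : C < 1)
    (bound : ∀ z ∈ s, ‖deriv f z - 1‖ ≤ C) : InjOn f s := by
  intro x hx y hy hxy
  have h := hs.norm_image_sub_le_of_norm_deriv_le (f := fun z => f z - z)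
    (fun z hz => (hf z hz).sub differentiableAt_id)
    (fun z hz => by rw [((hf z hz).hasDerivAt.fun_sub (hasDerivAt_id' z)).deriv]; exact bound z hz)
    hx hy
  rw [hxy, sub_sub_sub_cancel_left, norm_sub_rev] at h
  by_contra hne
  have := norm_pos_iff.mpr (sub_ne_zero.mpr (Ne.symm hne))
  nlinarith

end General

theorem lt_re_exp_mul_div_of_norm_sub_one_le {ξ γ ρ A B : ℝ} {a b : ℂ} (hρ0 : 0 ≤ ρ)
    (hρ1 : ρ < 1) (ha : ‖a - 1‖ ≤ A) (hb : ‖b‖ < B) (hδ : 0 < 1 - A - ρ * B)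
    (hAB : (1 - ρ) * B ≤ (1 - γ) * Real.cos ξ * (1 - A - ρ * B)) :
    a + ρ * b ≠ 0 ∧ γ * Real.cos ξ < (exp (I * ξ) * (b + a) / (a + ρ * b)).re := by
  have hD : 1 - A - ρ * B ≤ ‖a + ρ * b‖ := by
    have h1 : ‖1 - (a + ρ * b)‖ ≤ A + ρ * B := by
      calc ‖1 - (a + ρ * b)‖ = ‖(a - 1) + ρ * b‖ := by rw [← norm_neg]; congr 1; ring
        _ ≤ ‖a - 1‖ + ρ * ‖b‖ := by
          grw [norm_add_le, norm_mul, norm_real, Real.norm_of_nonneg hρ0]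
        _ ≤ A + ρ * B := by gcongr
    have h2 := norm_sub_norm_le 1 (a + ρ * b)
    rw [norm_one] at h2
    linarith
  have hD0 : 0 < ‖a + ρ * b‖ := hδ.trans_le hD
  have hne : a + ρ * b ≠ 0 := norm_pos_iff.mp hD0
  refine ⟨hne, ?_⟩
  have hsplit : exp (I * ξ) * (b + a) / (a + ρ * b)
      = exp (I * ξ) + exp (I * ξ) * ((1 - ρ) * b) / (a + ρ * b) := by
    rw [add_div' _ _ _ hne, div_left_inj' hne]
    ring
  have hrest : ‖exp (I * ξ) * ((1 - ρ) * b) / (a + ρ * b)‖ < (1 - γ) * Real.cos ξ := by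
    have h1ρ : ‖(1 : ℂ) - ρ‖ = 1 - ρ := by
      rw [← ofReal_one, ← ofReal_sub, norm_real, Real.norm_of_nonneg (by linarith)]
    rw [norm_div, norm_mul, norm_mul, mul_comm I, norm_exp_ofReal_mul_I, h1ρ, one_mul]
    calc (1 - ρ) * ‖b‖ / ‖a + ρ * b‖ ≤ (1 - ρ) * ‖b‖ / (1 - A - ρ * B) := by gcongr
      _ < (1 - ρ) * B / (1 - A - ρ * B) := by gcongr
      _ ≤ (1 - γ) * Real.cos ξ := (div_le_iff₀ hδ).mpr hAB
  have hre : (exp (I * ξ)).re = Real.cos ξ := by rw [mul_comm]; exact exp_ofReal_mul_I_re ξ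
  rw [hsplit, add_re, hre]
  linarith [neg_le_of_abs_le (abs_re_le_norm (exp (I * ξ) * ((1 - ρ) * b) / (a + ρ * b)))]

theorem criterion_of_coefficient_bound {ρ γ c s₀ s₁ s₂ : ℝ} (hρ1 : ρ < 1) (hγ1 : γ < 1)
    (hc : 0 < c) (hs₀ : 0 ≤ s₀) (hs₁ : 0 < s₁) (hs₂ : 0 ≤ s₂)
    (h : ((1 - ρ) * c⁻¹ + (1 - γ)) * s₂ + (2 * (1 - ρ) * c⁻¹ + (1 - γ) * (4 - ρ)) * s₁
      + (1 - γ) * (2 - ρ) * s₀ ≤ 1 - γ) :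
    0 < 1 - (s₀ + s₁) - ρ * (s₂ + 2 * s₁) ∧
      (1 - ρ) * (s₂ + 2 * s₁) ≤ (1 - γ) * c * (1 - (s₀ + s₁) - ρ * (s₂ + 2 * s₁)) := by
  have hγc : 0 < (1 - γ) * c := mul_pos (sub_pos.mpr hγ1) hc
  have hc' : (1 - ρ) * (s₂ + 2 * s₁) + (1 - γ) * c * (s₂ + (4 - ρ) * s₁ + (2 - ρ) * s₀)
      ≤ (1 - γ) * c := by
    have := mul_le_mul_of_nonneg_right h hc.le
    field_simp at this
    linarith
  have hslack : 0 ≤ (1 - γ) * c * ((1 - ρ) * (s₂ + 3 * s₁ + s₀)) :=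
    mul_nonneg hγc.le (mul_nonneg (sub_nonneg.mpr hρ1.le) (by positivity))
  have hle : (1 - ρ) * (s₂ + 2 * s₁) ≤ (1 - γ) * c * (1 - (s₀ + s₁) - ρ * (s₂ + 2 * s₁)) := by
    linarith
  have hpos : 0 < (1 - ρ) * (s₂ + 2 * s₁) := mul_pos (sub_pos.mpr hρ1) (by positivity)
  exact ⟨pos_of_mul_pos_right (hpos.trans_le hle) hγc.le, hle⟩

section Pascal

open Topology

variable {m : ℕ} {q : ℝ}

def pascalClosed (m : ℕ) (q : ℝ) (z : ℂ) : ℂ :=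
  z + (1 - (q : ℂ)) ^ m * (z * (((1 - q * z) ^ m)⁻¹ - 1))

def pascalClosedDeriv (m : ℕ) (q : ℝ) (z : ℂ) : ℂ :=
  1 + (1 - (q : ℂ)) ^ m * (((1 - q * z) ^ m)⁻¹ - 1 + m * q * z * ((1 - q * z) ^ (m + 1))⁻¹)

def pascalClosedDeriv2 (m : ℕ) (q : ℝ) (z : ℂ) : ℂ :=
  (1 - (q : ℂ)) ^ m * (2 * m * q * ((1 - q * z) ^ (m + 1))⁻¹
    + m * (m + 1 : ℕ) * q ^ 2 * z * ((1 - q * z) ^ (m + 2))⁻¹)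

theorem norm_ofReal_mul_lt_one (hq : |q| < 1) {z : ℂ} (hz : ‖z‖ < 1) : ‖(q : ℂ) * z‖ < 1 := by
  rw [norm_mul, norm_real, Real.norm_eq_abs]
  exact mul_lt_one_of_nonneg_of_lt_one_left (abs_nonneg q) hq hz.le

theorem one_sub_ofReal_mul_ne_zero (hq : |q| < 1) {z : ℂ} (hz : ‖z‖ < 1) : 1 - (q : ℂ) * z ≠ 0 :=
  fun h => by simpa [← sub_eq_zero.mp h] using norm_ofReal_mul_lt_one hq hz

theorem pascalTheta_eq_pascalClosed (hm : 1 ≤ m) (hq : |q| < 1) {z : ℂ} (hz : ‖z‖ < 1) :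
    pascalTheta m q z = pascalClosed m q z := by
  have h := (hasSum_choose_mul_pow_succ hm (norm_ofReal_mul_lt_one hq hz)).mul_left
    ((1 - (q : ℂ)) ^ m * z)
  rw [pascalTheta, pascalClosed, ← mul_assoc, ← h.tsum_eq]
  congr 2
  funext n
  ring

theorem hasDerivAt_pascalClosed {z : ℂ} (hz : 1 - (q : ℂ) * z ≠ 0) :
    HasDerivAt (pascalClosed m q) (pascalClosedDeriv m q z) z := by
  have hu := (hasDerivAt_inv_one_sub_mul_pow (q : ℂ) hz m).sub_const 1
  refine ((hasDerivAt_id' z).fun_add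
    (((hasDerivAt_id' z).fun_mul hu).const_mul ((1 - (q : ℂ)) ^ m))).congr_deriv ?_
  rw [pascalClosedDeriv]
  ring

theorem hasDerivAt_pascalClosedDeriv {z : ℂ} (hz : 1 - (q : ℂ) * z ≠ 0) :
    HasDerivAt (pascalClosedDeriv m q) (pascalClosedDeriv2 m q z) z := by
  have hu := hasDerivAt_inv_one_sub_mul_pow (q : ℂ) hz m
  refine (((hu.sub_const 1).fun_add (((hasDerivAt_id' z).const_mul ((m : ℂ) * q)).fun_mul
    (hasDerivAt_inv_one_sub_mul_pow (q : ℂ) hz (m + 1)))).const_mul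
    ((1 - (q : ℂ)) ^ m) |>.const_add 1).congr_deriv ?_
  rw [pascalClosedDeriv2]
  ring

theorem eventuallyEq_pascalTheta_pascalClosed (hm : 1 ≤ m) (hq : |q| < 1) {z : ℂ}
    (hz : z ∈ unitDisk) : pascalTheta m q =ᶠ[𝓝 z] pascalClosed m q :=
  Filter.eventually_of_mem (Metric.isOpen_ball.mem_nhds hz) fun _ hw =>
    pascalTheta_eq_pascalClosed hm hq (mem_ball_zero_iff.mp hw)

theorem hasDerivAt_pascalTheta (hm : 1 ≤ m) (hq : |q| < 1) {z : ℂ} (hz : z ∈ unitDisk) :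
    HasDerivAt (pascalTheta m q) (pascalClosedDeriv m q z) z :=
  (hasDerivAt_pascalClosed (one_sub_ofReal_mul_ne_zero hq (mem_ball_zero_iff.mp hz))
    ).congr_of_eventuallyEq (eventuallyEq_pascalTheta_pascalClosed hm hq hz)

theorem deriv_deriv_pascalTheta (hm : 1 ≤ m) (hq : |q| < 1) {z : ℂ} (hz : z ∈ unitDisk) :
    deriv (deriv (pascalTheta m q)) z = pascalClosedDeriv2 m q z := by
  have h : deriv (pascalTheta m q) =ᶠ[𝓝 z] pascalClosedDeriv m q :=
    Filter.eventually_of_mem (Metric.isOpen_ball.mem_nhds hz) fun _ hw =>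
      (hasDerivAt_pascalTheta hm hq hw).deriv
  exact ((hasDerivAt_pascalClosedDeriv
    (one_sub_ofReal_mul_ne_zero hq (mem_ball_zero_iff.mp hz))).congr_of_eventuallyEq h).deriv

theorem normalizedAnalytic_pascalTheta (hm : 1 ≤ m) (hq : |q| < 1) :
    NormalizedAnalytic (pascalTheta m q) := by
  have h0 : (0 : ℂ) ∈ unitDisk := Metric.mem_ball_self one_pos
  refine ⟨DifferentiableOn.analyticOn (fun z hz => ?_) Metric.isOpen_ball,
    by simp [pascalTheta], ?_⟩
  · exact (hasDerivAt_pascalTheta hm hq hz).differentiableAt.differentiableWithinAt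
  · rw [(hasDerivAt_pascalTheta hm hq h0).deriv]
    simp [pascalClosedDeriv]

theorem norm_ofReal_mul_le (hq0 : 0 ≤ q) {z : ℂ} (hz : ‖z‖ ≤ 1) : ‖(q : ℂ) * z‖ ≤ q := by
  rw [norm_mul, norm_real, Real.norm_of_nonneg hq0]
  exact mul_le_of_le_one_right hq0 hz

theorem norm_one_sub_ofReal_pow (hq1 : q ≤ 1) (k : ℕ) : ‖(1 - (q : ℂ)) ^ k‖ = (1 - q) ^ k := by
  rw [norm_pow, ← ofReal_one, ← ofReal_sub, norm_real, Real.norm_of_nonneg (sub_nonneg.mpr hq1)]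

theorem norm_pascalClosedDeriv_sub_one_le (hm : 1 ≤ m) (hq0 : 0 ≤ q) (hq1 : q < 1) {z : ℂ}
    (hz : ‖z‖ ≤ 1) : ‖pascalClosedDeriv m q z - 1‖ ≤ 1 - (1 - q) ^ m + m * q / (1 - q) := by
  have hqz := norm_ofReal_mul_le hq0 hz
  have h1q : 0 < 1 - q := sub_pos.mpr hq1
  calc ‖pascalClosedDeriv m q z - 1‖
      = (1 - q) ^ m * ‖((1 - q * z) ^ m)⁻¹ - 1 + m * q * z * ((1 - q * z) ^ (m + 1))⁻¹‖ := by
        rw [pascalClosedDeriv, add_sub_cancel_left, norm_mul, norm_one_sub_ofReal_pow hq1.le]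
    _ ≤ (1 - q) ^ m * (((1 - q) ^ m)⁻¹ - 1 + m * q * 1 * ((1 - q) ^ (m + 1))⁻¹) := by
        gcongr
        refine (norm_add_le _ _).trans (add_le_add (norm_inv_one_sub_pow_sub_one_le hm hqz hq1) ?_)
        rw [norm_mul, norm_mul, norm_mul, Complex.norm_natCast, norm_real, Real.norm_of_nonneg hq0]
        gcongr
        exact norm_inv_one_sub_pow_le hqz hq1 _
    _ = 1 - (1 - q) ^ m + m * q / (1 - q) := by
        field_simp
        ring

theorem norm_pascalClosedDeriv2_le (hq0 : 0 ≤ q) (hq1 : q < 1) {z : ℂ} (hz : ‖z‖ ≤ 1) :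
    ‖pascalClosedDeriv2 m q z‖ ≤ m * (m + 1) * q ^ 2 / (1 - q) ^ 2 + 2 * (m * q / (1 - q)) := by
  have hqz := norm_ofReal_mul_le hq0 hz
  have h1q : 0 < 1 - q := sub_pos.mpr hq1
  calc ‖pascalClosedDeriv2 m q z‖
      = (1 - q) ^ m * ‖2 * m * q * ((1 - q * z) ^ (m + 1))⁻¹
          + m * (m + 1 : ℕ) * q ^ 2 * z * ((1 - q * z) ^ (m + 2))⁻¹‖ := by
        rw [pascalClosedDeriv2, norm_mul, norm_one_sub_ofReal_pow hq1.le]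
    _ ≤ (1 - q) ^ m * (2 * m * q * ((1 - q) ^ (m + 1))⁻¹
          + m * (m + 1 : ℕ) * q ^ 2 * 1 * ((1 - q) ^ (m + 2))⁻¹) := by
        gcongr
        refine (norm_add_le _ _).trans (add_le_add ?_ ?_)
        · simp only [norm_mul, Complex.norm_ofNat, Complex.norm_natCast, norm_real,
            Real.norm_of_nonneg hq0]
          gcongr
          exact norm_inv_one_sub_pow_le hqz hq1 _
        · simp only [norm_mul, norm_pow, Complex.norm_natCast, norm_real, Real.norm_of_nonneg hq0]
          gcongr
          exact norm_inv_one_sub_pow_le hqz hq1 _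
    _ = m * (m + 1) * q ^ 2 / (1 - q) ^ 2 + 2 * (m * q / (1 - q)) := by
        field_simp
        push_cast
        ring

theorem norm_deriv_pascalTheta_sub_one_le (hm : 1 ≤ m) (hq0 : 0 ≤ q) (hq1 : q < 1) {z : ℂ}
    (hz : z ∈ unitDisk) : ‖deriv (pascalTheta m q) z - 1‖ ≤ 1 - (1 - q) ^ m + m * q / (1 - q) := by
  rw [(hasDerivAt_pascalTheta hm (abs_lt.mpr ⟨by linarith, hq1⟩) hz).deriv]
  exact norm_pascalClosedDeriv_sub_one_le hm hq0 hq1 (mem_ball_zero_iff.mp hz).le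

theorem norm_mul_deriv_deriv_pascalTheta_lt (hm : 1 ≤ m) (hq0 : 0 < q) (hq1 : q < 1) {z : ℂ}
    (hz : z ∈ unitDisk) :
    ‖z * deriv (deriv (pascalTheta m q)) z‖
      < m * (m + 1) * q ^ 2 / (1 - q) ^ 2 + 2 * (m * q / (1 - q)) := by
  have hz' : ‖z‖ < 1 := mem_ball_zero_iff.mp hz
  have hB : 0 < (m : ℝ) * (m + 1) * q ^ 2 / (1 - q) ^ 2 + 2 * (m * q / (1 - q)) := by
    have : (0 : ℝ) < m := by exact_mod_cast hm
    have := sub_pos.mpr hq1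
    positivity
  rw [deriv_deriv_pascalTheta hm (abs_lt.mpr ⟨by linarith, hq1⟩) hz, norm_mul]
  calc ‖z‖ * ‖pascalClosedDeriv2 m q z‖
      ≤ ‖z‖ * (m * (m + 1) * q ^ 2 / (1 - q) ^ 2 + 2 * (m * q / (1 - q))) := by
        gcongr
        exact norm_pascalClosedDeriv2_le hq0.le hq1 hz'.le
    _ < _ := mul_lt_of_lt_one_left hB hz'

end Pascal

theorem stmt6_general (m : ℕ) (hm : 1 ≤ m) (q : ℝ) (hq0 : 0 < q) (hq1 : q < 1)
    (ξ ρ γ : ℝ) (hξ : |ξ| < π / 2) (hρ0 : 0 ≤ ρ) (hρ1 : ρ < 1)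
    (hγ1 : γ < 1)
    (h : ((1 - ρ) * (Real.cos ξ)⁻¹ + (1 - γ)) * ((m : ℝ) * ((m : ℝ) + 1) * q ^ 2 / (1 - q) ^ 2)
        + (2 * (1 - ρ) * (Real.cos ξ)⁻¹ + (1 - γ) * (4 - ρ)) * ((m : ℝ) * q / (1 - q))
        + (1 - γ) * (2 - ρ) * (1 - (1 - q) ^ m) ≤ 1 - γ) :
    SpiralK ξ γ ρ (pascalTheta m q) := by
  have hq : |q| < 1 := abs_lt.mpr ⟨by linarith, hq1⟩
  have hs₀ : 0 ≤ 1 - (1 - q) ^ m := sub_nonneg.mpr (pow_le_one₀ (by linarith) (by linarith))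
  have hs₁ : 0 < m * q / (1 - q) := by
    have : (0 : ℝ) < m := by exact_mod_cast hm
    have := sub_pos.mpr hq1
    positivity
  have hs₂ : 0 ≤ (m : ℝ) * (m + 1) * q ^ 2 / (1 - q) ^ 2 := by positivity
  obtain ⟨hδ, hcond⟩ := criterion_of_coefficient_bound hρ1 hγ1
    (cos_pos_of_mem_Ioo (abs_lt.mp hξ)) hs₀ hs₁ hs₂ h
  have hA : 1 - (1 - q) ^ m + m * q / (1 - q) < 1 := by
    nlinarith [mul_nonneg hρ0 (add_nonneg hs₂ (mul_nonneg zero_le_two hs₁.le))]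
  refine ⟨normalizedAnalytic_pascalTheta hm hq,
    (convex_ball 0 1).injOn_of_norm_deriv_sub_one_le
      (fun z hz => (hasDerivAt_pascalTheta hm hq hz).differentiableAt) hA
      (fun z hz => norm_deriv_pascalTheta_sub_one_le hm hq0.le hq1 hz), fun z hz => ?_⟩
  rw [mul_assoc (ρ : ℂ) z]
  exact lt_re_exp_mul_div_of_norm_sub_one_le hρ0 hρ1
    (norm_deriv_pascalTheta_sub_one_le hm hq0.le hq1 hz)
    (norm_mul_deriv_deriv_pascalTheta_lt hm hq0 hq1 hz) hδ hcond

/-- Theorem 2, `Θ_q^m ∈ 𝒦(ξ, γ, ρ)`. -/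
theorem stmt6 (m : ℕ) (hm : 1 ≤ m) (q : ℝ) (hq0 : 0 < q) (hq1 : q < 1)
    (ξ ρ γ : ℝ) (hξ : |ξ| < π / 2) (hρ0 : 0 ≤ ρ) (hρ1 : ρ < 1)
    (hγ0 : 0 ≤ γ) (hγ1 : γ < 1)
    (h : ((1 - ρ) * (Real.cos ξ)⁻¹ + (1 - γ)) * ((m : ℝ) * ((m : ℝ) + 1) * q ^ 2 / (1 - q) ^ 2)
        + (2 * (1 - ρ) * (Real.cos ξ)⁻¹ + (1 - γ) * (4 - ρ)) * ((m : ℝ) * q / (1 - q))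
        + (1 - γ) * (2 - ρ) * (1 - (1 - q) ^ m) ≤ 1 - γ) :
    SpiralK ξ γ ρ (pascalTheta m q) :=
  stmt6_general m hm q hq0 hq1 ξ ρ γ hξ hρ0 hρ1 hγ1 h
end
end

section
/- Let m ≥ 1 be an integer, 0 < q < 1, |ξ| < π/2 and 0 ≤ γ < 1. If q m sec ξ / (1-q)^{m+1} ≤ 1 - γ, then the Pascal distribution series Θ_q^m belongs to the class 𝒮(ξ, γ). -/
noncomputable section

open Complex Real Set

/-!
Write `f = Θ_q^m = z + ∑ c n z^(n+2)`. The classical coefficient test applies: with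
`C = (1 - γ) cos ξ`, the condition `∑ ((n + 1) + C) ‖c n‖ ≤ C` gives
`‖z f' - f‖ + C ‖f - z‖ ≤ ‖z‖² C < ‖z‖ C`, hence `‖z f' - f‖ < C ‖f‖`, which puts
`e^{iξ} z f' / f` in the disk of radius `C` about `e^{iξ}`; and since `C ≤ 1` it also gives
`∑ (n + 2) ‖c n‖ ≤ 1`, so `‖f' - 1‖ ≤ ‖z‖` and `f` is injective.
The Pascal coefficients are negative binomial probabilities: `∑ ‖c n‖ = 1 - (1 - q)^m` and
`∑ (n + 1) ‖c n‖ = m q / (1 - q)` is the mean, so the test is exactly the hypothesis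
`m q sec ξ / (1 - q)^(m + 1) ≤ 1 - γ`.
-/

lemma mem_unitDisk {z : ℂ} : z ∈ unitDisk ↔ ‖z‖ < 1 := mem_ball_zero_iff

lemma isOpen_unitDisk : IsOpen unitDisk := Metric.isOpen_ball

lemma cos_sub_lt_re_exp_mul_div {E F : ℂ} {ε : ℝ} (ξ : ℝ) (h : ‖E - F‖ < ε * ‖F‖) :
    Real.cos ξ - ε < (Complex.exp (Complex.I * ξ) * E / F).re := by
  have hF : F ≠ 0 := by
    rintro rfl
    simp only [norm_zero, mul_zero] at h
    exact (norm_nonneg _).not_gt h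
  set u := Complex.exp (ξ * Complex.I)
  have hsplit : u * E / F = u + u * ((E - F) / F) := by
    field_simp
    ring
  have hnorm : ‖u * ((E - F) / F)‖ < ε := by
    rw [norm_mul, Complex.norm_exp_ofReal_mul_I, one_mul, norm_div,
      div_lt_iff₀ (norm_pos_iff.2 hF)]
    exact h
  rw [mul_comm Complex.I, hsplit, Complex.add_re, Complex.exp_ofReal_mul_I_re]
  linarith [neg_abs_le (u * ((E - F) / F)).re, Complex.abs_re_le_norm (u * ((E - F) / F))]

lemma norm_mul_pow_le_of_norm_le_one (c : ℂ) (k : ℕ) {w : ℂ} (hw : ‖w‖ ≤ 1) :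
    ‖c * w ^ k‖ ≤ ‖c‖ := by
  rw [norm_mul, norm_pow]
  exact mul_le_of_le_one_right (norm_nonneg _) (pow_le_one₀ (norm_nonneg _) hw)

/-- `c n` is the paper's `a_{n+2}`. -/
def normalizedSeries (c : ℕ → ℂ) (z : ℂ) : ℂ := z + ∑' n, c n * z ^ (n + 2)

section NormalizedSeries

variable {c : ℕ → ℂ}

lemma summable_norm_of_summable_add_two_mul
    (hc : Summable fun n : ℕ => ((n : ℝ) + 2) * ‖c n‖) :
    Summable (‖c ·‖) :=
  hc.of_nonneg_of_le (fun _ => norm_nonneg _) fun n =>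
    le_mul_of_one_le_left (norm_nonneg _) (by linarith [n.cast_nonneg (α := ℝ)])

lemma summable_add_one_mul_of_summable_add_two_mul
    (hc : Summable fun n : ℕ => ((n : ℝ) + 2) * ‖c n‖) :
    Summable fun n : ℕ => ((n : ℝ) + 1) * ‖c n‖ :=
  hc.of_nonneg_of_le (fun _ => by positivity) fun _ =>
    mul_le_mul_of_nonneg_right (by linarith) (norm_nonneg _)

lemma hasDerivAt_normalizedSeries (hc : Summable (‖c ·‖)) {z : ℂ} (hz : z ∈ unitDisk) :
    HasDerivAt (normalizedSeries c) (1 + ∑' n, c n * ((n + 2) * z ^ (n + 1))) z := by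
  have hterm (n : ℕ) : DifferentiableOn ℂ (fun w : ℂ => c n * w ^ (n + 2)) unitDisk :=
    ((differentiable_id.pow _).const_mul _).differentiableOn
  have hbound (n : ℕ) (w : ℂ) (hw : w ∈ unitDisk) : ‖c n * w ^ (n + 2)‖ ≤ ‖c n‖ :=
    norm_mul_pow_le_of_norm_le_one _ _ (mem_unitDisk.1 hw).le
  have hdiff := (differentiableOn_tsum_of_summable_norm hc hterm isOpen_unitDisk
    hbound).differentiableAt (isOpen_unitDisk.mem_nhds hz)
  have hderiv := hasSum_deriv_of_summable_norm hc hterm isOpen_unitDisk hbound hz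
  refine (hasDerivAt_id z).add ?_
  convert hdiff.hasDerivAt using 1
  rw [← hderiv.tsum_eq]
  congr 1 with n
  simp [mul_comm]

lemma normalizedAnalytic_normalizedSeries (hc : Summable (‖c ·‖)) :
    NormalizedAnalytic (normalizedSeries c) := by
  refine ⟨?_, by simp [normalizedSeries], ?_⟩
  · have hdiff : DifferentiableOn ℂ (normalizedSeries c) unitDisk := fun z hz =>
      (hasDerivAt_normalizedSeries hc hz).differentiableAt.differentiableWithinAt
    exact (hdiff.analyticOnNhd isOpen_unitDisk).analyticOn
  · rw [(hasDerivAt_normalizedSeries hc (mem_unitDisk.2 (by simp))).deriv]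
    simp

lemma norm_coeff_mul_deriv_term (c : ℂ) (n : ℕ) (z : ℂ) :
    ‖c * ((n + 2) * z ^ (n + 1))‖ = ((n : ℝ) + 2) * ‖c‖ * ‖z‖ ^ (n + 1) := by
  rw [norm_mul, norm_mul, norm_pow, show ((n : ℂ) + 2) = ((n + 2 : ℝ) : ℂ) by push_cast; rfl,
    Complex.norm_real, Real.norm_of_nonneg (by positivity)]
  ring

lemma norm_deriv_normalizedSeries_sub_one_le
    (hc : Summable fun n : ℕ => ((n : ℝ) + 2) * ‖c n‖) {z : ℂ} (hz : z ∈ unitDisk) :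
    ‖deriv (normalizedSeries c) z - 1‖ ≤ ‖z‖ * ∑' n : ℕ, ((n : ℝ) + 2) * ‖c n‖ := by
  rw [(hasDerivAt_normalizedSeries (summable_norm_of_summable_add_two_mul hc) hz).deriv,
    add_sub_cancel_left]
  refine tsum_of_norm_bounded (hc.hasSum.mul_left ‖z‖) fun n => ?_
  have hpow : ‖z‖ ^ (n + 1) ≤ ‖z‖ :=
    pow_le_of_le_one (norm_nonneg _) (mem_unitDisk.1 hz).le (by omega)
  calc ‖c n * ((n + 2) * z ^ (n + 1))‖ = ((n : ℝ) + 2) * ‖c n‖ * ‖z‖ ^ (n + 1) :=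
        norm_coeff_mul_deriv_term _ _ _
    _ ≤ ‖z‖ * (((n : ℝ) + 2) * ‖c n‖) := by
        rw [mul_comm ‖z‖]; gcongr

/-- The tail `f z - z` is `M`-Lipschitz on the disk of radius `M < 1`, so `f` is injective. -/
lemma injOn_normalizedSeries (hc : Summable fun n : ℕ => ((n : ℝ) + 2) * ‖c n‖)
    (h : ∑' n : ℕ, ((n : ℝ) + 2) * ‖c n‖ ≤ 1) : InjOn (normalizedSeries c) unitDisk := by
  intro z hz w hw hzw
  set M := max ‖z‖ ‖w‖
  have hM : M < 1 := max_lt (mem_unitDisk.1 hz) (mem_unitDisk.1 hw)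
  have hsub : Metric.closedBall (0 : ℂ) M ⊆ unitDisk := Metric.closedBall_subset_ball hM
  have htail (x : ℂ) (hx : x ∈ Metric.closedBall (0 : ℂ) M) :
      HasDerivAt (fun x => normalizedSeries c x - x) (deriv (normalizedSeries c) x - 1) x :=
    (hasDerivAt_normalizedSeries (summable_norm_of_summable_add_two_mul hc)
      (hsub hx)).differentiableAt.hasDerivAt.sub (hasDerivAt_id' x)
  have hlip : ‖(normalizedSeries c w - w) - (normalizedSeries c z - z)‖ ≤ M * ‖w - z‖ := by
    refine (convex_closedBall (0 : ℂ) M).norm_image_sub_le_of_norm_deriv_le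
      (fun x hx => (htail x hx).differentiableAt) (fun x hx => ?_) (by simp [M]) (by simp [M])
    rw [(htail x hx).deriv]
    calc ‖deriv (normalizedSeries c) x - 1‖
        ≤ ‖x‖ * ∑' n : ℕ, ((n : ℝ) + 2) * ‖c n‖ :=
          norm_deriv_normalizedSeries_sub_one_le hc (hsub hx)
      _ ≤ M * 1 := by
          gcongr
          simpa using hx
      _ = M := mul_one M
  rw [hzw, sub_sub_sub_cancel_left, norm_sub_rev] at hlip
  have : ‖w - z‖ = 0 := by nlinarith [norm_nonneg (w - z)]
  exact (sub_eq_zero.1 (norm_eq_zero.1 this)).symm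

lemma norm_mul_deriv_sub_add_mul_norm_sub_le
    (hc : Summable fun n : ℕ => ((n : ℝ) + 2) * ‖c n‖) {C : ℝ} (hC : 0 ≤ C) {z : ℂ}
    (hz : z ∈ unitDisk) :
    ‖z * deriv (normalizedSeries c) z - normalizedSeries c z‖ + C * ‖normalizedSeries c z - z‖
      ≤ ‖z‖ ^ 2 * ∑' n : ℕ, ((n : ℝ) + 1 + C) * ‖c n‖ := by
  have hc0 := summable_norm_of_summable_add_two_mul hc
  have hc1 := summable_add_one_mul_of_summable_add_two_mul hc
  have hpow (n : ℕ) : ‖z‖ ^ (n + 2) ≤ ‖z‖ ^ 2 :=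
    pow_le_pow_of_le_one (norm_nonneg _) (mem_unitDisk.1 hz).le (by omega)
  have hT : Summable fun n => c n * z ^ (n + 2) :=
    .of_norm_bounded hc0 fun n => norm_mul_pow_le_of_norm_le_one _ _ (mem_unitDisk.1 hz).le
  have hD : Summable fun n : ℕ => c n * ((n + 2) * z ^ (n + 1)) := by
    refine .of_norm_bounded hc fun n => ?_
    rw [norm_coeff_mul_deriv_term]
    exact mul_le_of_le_one_right (by positivity)
      (pow_le_one₀ (norm_nonneg _) (mem_unitDisk.1 hz).le)
  have hE : z * deriv (normalizedSeries c) z - normalizedSeries c z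
      = ∑' n : ℕ, ((n : ℂ) + 1) * c n * z ^ (n + 2) := by
    rw [(hasDerivAt_normalizedSeries hc0 hz).deriv, normalizedSeries, mul_add, mul_one,
      add_sub_add_left_eq_sub, ← tsum_mul_left, ← (hD.mul_left z).tsum_sub hT]
    congr 1 with n
    ring
  have hEle : ‖z * deriv (normalizedSeries c) z - normalizedSeries c z‖
      ≤ ‖z‖ ^ 2 * ∑' n : ℕ, ((n : ℝ) + 1) * ‖c n‖ := by
    rw [hE]
    refine tsum_of_norm_bounded (hc1.hasSum.mul_left _) fun n => ?_
    rw [norm_mul, norm_mul, norm_pow, show ((n : ℂ) + 1) = ((n + 1 : ℝ) : ℂ) by push_cast; rfl,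
      Complex.norm_real, Real.norm_of_nonneg (by positivity), mul_comm (‖z‖ ^ 2)]
    exact mul_le_mul_of_nonneg_left (hpow n) (by positivity)
  have hFle : ‖normalizedSeries c z - z‖ ≤ ‖z‖ ^ 2 * ∑' n : ℕ, ‖c n‖ := by
    rw [normalizedSeries, add_sub_cancel_left]
    refine tsum_of_norm_bounded (hc0.hasSum.mul_left _) fun n => ?_
    rw [norm_mul, norm_pow, mul_comm (‖z‖ ^ 2)]
    exact mul_le_mul_of_nonneg_left (hpow n) (by positivity)
  have hsplit : ∑' n : ℕ, ((n : ℝ) + 1 + C) * ‖c n‖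
      = ∑' n : ℕ, ((n : ℝ) + 1) * ‖c n‖ + C * ∑' n : ℕ, ‖c n‖ := by
    rw [← tsum_mul_left, ← hc1.tsum_add (hc0.mul_left C)]
    congr 1 with n
    ring
  rw [hsplit]
  linarith [mul_le_mul_of_nonneg_left hFle hC]

lemma norm_mul_deriv_sub_lt (hc : Summable fun n : ℕ => ((n : ℝ) + 2) * ‖c n‖) {C : ℝ}
    (hC : 0 < C) (hb : ∑' n : ℕ, ((n : ℝ) + 1 + C) * ‖c n‖ ≤ C)
    {z : ℂ} (hz : z ∈ unitDisk) (hz0 : z ≠ 0) :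
    ‖z * deriv (normalizedSeries c) z - normalizedSeries c z‖
      < C * ‖normalizedSeries c z‖ := by
  have hr0 : 0 < ‖z‖ := norm_pos_iff.2 hz0
  have hr1 : ‖z‖ < 1 := mem_unitDisk.1 hz
  have hest := norm_mul_deriv_sub_add_mul_norm_sub_le hc hC.le hz
  have hlow : ‖z‖ - ‖normalizedSeries c z - z‖ ≤ ‖normalizedSeries c z‖ := by
    simpa [norm_sub_rev z] using norm_sub_norm_le z (z - normalizedSeries c z)
  calc ‖z * deriv (normalizedSeries c) z - normalizedSeries c z‖
      ≤ ‖z‖ ^ 2 * C - C * ‖normalizedSeries c z - z‖ := by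
        nlinarith [mul_le_mul_of_nonneg_left hb (sq_nonneg ‖z‖)]
    _ < C * (‖z‖ - ‖normalizedSeries c z - z‖) := by
        nlinarith [mul_lt_mul_of_pos_left (show ‖z‖ ^ 2 < ‖z‖ by nlinarith) hC]
    _ ≤ C * ‖normalizedSeries c z‖ := by gcongr

theorem spiralS0_normalizedSeries {ξ γ : ℝ} (hγ0 : 0 ≤ γ) (hγ1 : γ < 1)
    (hcos : 0 < Real.cos ξ) (hc : Summable fun n : ℕ => ((n : ℝ) + 2) * ‖c n‖)
    (hb : ∑' n : ℕ, ((n : ℝ) + 1 + (1 - γ) * Real.cos ξ) * ‖c n‖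
      ≤ (1 - γ) * Real.cos ξ) :
    SpiralS0 ξ γ (normalizedSeries c) := by
  set C := (1 - γ) * Real.cos ξ
  have hC0 : 0 < C := mul_pos (by linarith) hcos
  have hC1 : C ≤ 1 := by nlinarith [Real.cos_le_one ξ]
  have hinj : ∑' n : ℕ, ((n : ℝ) + 2) * ‖c n‖ ≤ 1 := by
    refine le_of_mul_le_mul_left ?_ hC0
    rw [← tsum_mul_left, mul_one]
    refine le_trans ((hc.mul_left C).tsum_le_tsum (fun n => ?_) ?_) hb
    · nlinarith [mul_le_mul_of_nonneg_right hC1 (by positivity : (0 : ℝ) ≤ (n + 1) * ‖c n‖)]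
    · exact hc.of_nonneg_of_le (fun n => by positivity) fun n =>
        mul_le_mul_of_nonneg_right (by linarith) (norm_nonneg _)
  refine ⟨normalizedAnalytic_normalizedSeries (summable_norm_of_summable_add_two_mul hc),
    injOn_normalizedSeries hc hinj, fun z hz hz0 => ?_⟩
  have hlt := norm_mul_deriv_sub_lt hc hC0 hb hz hz0
  refine ⟨fun h0 => ?_, ?_⟩
  · rw [h0, norm_zero, mul_zero] at hlt
    exact (norm_nonneg _).not_gt hlt
  · have := cos_sub_lt_re_exp_mul_div ξ hlt
    linarith

end NormalizedSeries

def pascalCoeff (m : ℕ) (q : ℝ) (n : ℕ) : ℂ :=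
  ((n + m).choose (m - 1) : ℂ) * (q : ℂ) ^ (n + 1) * (1 - (q : ℂ)) ^ m

lemma pascalTheta_eq_normalizedSeries (m : ℕ) (q : ℝ) :
    pascalTheta m q = normalizedSeries (pascalCoeff m q) :=
  rfl

section Pascal

variable {q : ℝ}

lemma norm_pascalCoeff (k : ℕ) (hq0 : 0 ≤ q) (hq1 : q ≤ 1) (n : ℕ) :
    ‖pascalCoeff (k + 1) q n‖ = (n + (k + 1)).choose k * q ^ (n + 1) * (1 - q) ^ (k + 1) := by
  have hreal : pascalCoeff (k + 1) q n
      = (((n + (k + 1)).choose k * q ^ (n + 1) * (1 - q) ^ (k + 1) : ℝ) : ℂ) := by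
    rw [pascalCoeff, Nat.add_sub_cancel]
    push_cast
    ring
  rw [hreal, Complex.norm_real,
    Real.norm_of_nonneg (mul_nonneg (by positivity) (pow_nonneg (sub_nonneg.2 hq1) _))]

lemma hasSum_norm_pascalCoeff (k : ℕ) (hq0 : 0 ≤ q) (hq1 : q < 1) :
    HasSum (fun n => ‖pascalCoeff (k + 1) q n‖) (1 - (1 - q) ^ (k + 1)) := by
  have hq : ‖q‖ < 1 := by rwa [Real.norm_of_nonneg hq0]
  have hgeom : HasSum (fun n : ℕ => ((n + 1 + k).choose k : ℝ) * q ^ (n + 1))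
      (1 / (1 - q) ^ (k + 1) - 1) := by
    refine (hasSum_nat_add_iff (f := fun n : ℕ => ((n + k).choose k : ℝ) * q ^ n) 1).2 ?_
    simpa using hasSum_choose_mul_geometric_of_norm_lt_one k hq
  have hsum : 1 - (1 - q) ^ (k + 1) = (1 - q) ^ (k + 1) * (1 / (1 - q) ^ (k + 1) - 1) := by
    have : (1 - q) ^ (k + 1) ≠ 0 := pow_ne_zero _ (by linarith)
    field_simp
  rw [hsum]
  refine (hgeom.mul_left _).congr_fun fun n => ?_
  rw [norm_pascalCoeff k hq0 hq1.le, show n + 1 + k = n + (k + 1) by omega]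
  ring

lemma hasSum_succ_mul_norm_pascalCoeff (k : ℕ) (hq0 : 0 ≤ q) (hq1 : q < 1) :
    HasSum (fun n : ℕ => ((n : ℝ) + 1) * ‖pascalCoeff (k + 1) q n‖)
      ((k + 1) * q / (1 - q)) := by
  have hq : ‖q‖ < 1 := by rwa [Real.norm_of_nonneg hq0]
  have hgeom := hasSum_choose_mul_geometric_of_norm_lt_one (k + 1) hq
  have hsum : ((k : ℝ) + 1) * q / (1 - q)
      = ((k : ℝ) + 1) * q * (1 - q) ^ (k + 1) * (1 / (1 - q) ^ (k + 1 + 1)) := by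
    have : 1 - q ≠ 0 := by linarith
    field_simp
    ring
  rw [hsum]
  refine (hgeom.mul_left _).congr_fun fun n => ?_
  have hchoose : ((n + (k + 1)).choose k : ℝ) * (n + 1)
      = (n + (k + 1)).choose (k + 1) * (k + 1) := by
    have := Nat.choose_succ_right_eq (n + (k + 1)) k
    rw [show n + (k + 1) - k = n + 1 by omega] at this
    exact_mod_cast this.symm
  rw [norm_pascalCoeff k hq0 hq1.le]
  linear_combination (q ^ (n + 1) * (1 - q) ^ (k + 1)) * hchoose

lemma hasSum_add_one_add_mul_norm_pascalCoeff (k : ℕ) (hq0 : 0 ≤ q) (hq1 : q < 1) (C : ℝ) :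
    HasSum (fun n : ℕ => ((n : ℝ) + 1 + C) * ‖pascalCoeff (k + 1) q n‖)
      ((k + 1) * q / (1 - q) + C * (1 - (1 - q) ^ (k + 1))) :=
  ((hasSum_succ_mul_norm_pascalCoeff k hq0 hq1).add
    ((hasSum_norm_pascalCoeff k hq0 hq1).mul_left C)).congr_fun fun n => by ring

end Pascal

/-- Corollary 1, `Θ_q^m ∈ 𝒮(ξ, γ)`. -/
theorem stmt11 (m : ℕ) (hm : 1 ≤ m) (q : ℝ) (hq0 : 0 < q) (hq1 : q < 1)
    (ξ γ : ℝ) (hξ : |ξ| < π / 2) (hγ0 : 0 ≤ γ) (hγ1 : γ < 1)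
    (h : q * m * (Real.cos ξ)⁻¹ / (1 - q) ^ (m + 1) ≤ 1 - γ) :
    SpiralS0 ξ γ (pascalTheta m q) := by
  obtain ⟨k, rfl⟩ : ∃ k, m = k + 1 := ⟨m - 1, by omega⟩
  have hcos : 0 < Real.cos ξ := Real.cos_pos_of_mem_Ioo (abs_lt.1 hξ)
  have hq' : 0 < 1 - q := by linarith
  set C := (1 - γ) * Real.cos ξ
  have hmean : ((k : ℝ) + 1) * q / (1 - q) ≤ C * (1 - q) ^ (k + 1) := by
    have h' := (div_le_iff₀ (pow_pos hq' _)).1 h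
    push_cast at h'
    rw [div_le_iff₀ hq']
    calc ((k : ℝ) + 1) * q = q * (k + 1) * (Real.cos ξ)⁻¹ * Real.cos ξ := by field_simp
      _ ≤ (1 - γ) * (1 - q) ^ (k + 1 + 1) * Real.cos ξ := by gcongr
      _ = C * (1 - q) ^ (k + 1) * (1 - q) := by ring
  have hsummable := (hasSum_add_one_add_mul_norm_pascalCoeff k hq0.le hq1 1).summable
  rw [pascalTheta_eq_normalizedSeries]
  refine spiralS0_normalizedSeries hγ0 hγ1 hcos (hsummable.congr fun n => by ring) ?_
  rw [(hasSum_add_one_add_mul_norm_pascalCoeff k hq0.le hq1 C).tsum_eq]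
  linarith
end
end

section
/- Let m ≥ 1 be an integer, 0 < q < 1, |ξ| < π/2, 0 ≤ ρ < 1 and 0 ≤ γ < 1. Then Σ_{n=2}^∞ [ (1-ρ)(n-1) sec ξ + (1-γ)(1 + nρ - ρ) ] · C(n+m-2, m-1) q^{n-1} (1-q)^m = [ (1-ρ) sec ξ + ρ(1-γ) ] · q m / (1-q) + (1-γ) · ( 1 - (1-q)^m ). -/
noncomputable section

open Complex Real Set

/-! The coefficient of `z^(j+1)` in `Θ_q^m` is the negative binomial probability
`pⱼ = C(j+k, k) qʲ (1-q)^m`, `m = k + 1`. Its total mass `1` and its mean `m q / (1 - q)` follow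
from `∑ C(n+k, k) qⁿ = (1 - q)^-(k+1)`, the mean via `j C(j+k, k) = (k+1) (C(j+k+1, k+1) - C(j+k, k))`.
The weight in the sum is affine in `j`, say `A j + B`, so the sum over `j ≥ 1` equals
`A · m q / (1 - q) + B (1 - p₀)`. -/

section PascalDistribution

variable {𝕜 : Type*} [NormedField 𝕜]

def pascalWeight (k : ℕ) (q : 𝕜) (n : ℕ) : 𝕜 :=
  (n + k).choose k * q ^ n * (1 - q) ^ (k + 1)

lemma pascalWeight_zero (k : ℕ) (q : 𝕜) : pascalWeight k q 0 = (1 - q) ^ (k + 1) := by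
  simp [pascalWeight]

lemma cast_mul_add_choose (n k : ℕ) :
    (n : 𝕜) * (n + k).choose k = (k + 1) * ((n + (k + 1)).choose (k + 1) - (n + k).choose k) := by
  have h := congrArg (Nat.cast : ℕ → 𝕜) (Nat.add_one_mul_choose_eq (n + k) k)
  rw [← add_assoc]
  push_cast at h
  linear_combination h

variable {q : 𝕜}

lemma one_sub_ne_zero_of_norm_lt_one (hq : ‖q‖ < 1) : 1 - q ≠ 0 :=
  sub_ne_zero.2 fun h ↦ by simp [← h] at hq

theorem hasSum_pascalWeight (k : ℕ) (hq : ‖q‖ < 1) : HasSum (pascalWeight k q) 1 := by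
  have h := (hasSum_choose_mul_geometric_of_norm_lt_one k hq).mul_right ((1 - q) ^ (k + 1))
  rwa [one_div, inv_mul_cancel₀ (pow_ne_zero _ (one_sub_ne_zero_of_norm_lt_one hq))] at h

theorem hasSum_mul_pascalWeight (k : ℕ) (hq : ‖q‖ < 1) :
    HasSum (fun n ↦ n * pascalWeight k q n) ((k + 1) * q / (1 - q)) := by
  have hq' := one_sub_ne_zero_of_norm_lt_one hq
  have h := (((hasSum_choose_mul_geometric_of_norm_lt_one (k + 1) hq).sub
    (hasSum_choose_mul_geometric_of_norm_lt_one k hq)).mul_left ((k : 𝕜) + 1)).mul_right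
    ((1 - q) ^ (k + 1))
  rw [show (k + 1) * q / (1 - q)
      = (k + 1) * (1 / (1 - q) ^ (k + 1 + 1) - 1 / (1 - q) ^ (k + 1)) * (1 - q) ^ (k + 1) by
    field_simp; ring]
  refine h.congr_fun fun n ↦ ?_
  rw [pascalWeight, ← mul_assoc, ← mul_assoc, cast_mul_add_choose]
  ring

theorem hasSum_affine_mul_pascalWeight_succ (k : ℕ) (hq : ‖q‖ < 1) (a b : 𝕜) :
    HasSum (fun n : ℕ ↦ (a * (n + 1) + b) * pascalWeight k q (n + 1))
      (a * ((k + 1) * q / (1 - q)) + b * (1 - (1 - q) ^ (k + 1))) := by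
  have hmean := (hasSum_nat_add_iff' (f := fun n : ℕ ↦ n * pascalWeight k q n) 1).2
    (hasSum_mul_pascalWeight k hq)
  have htotal := (hasSum_nat_add_iff' (f := pascalWeight k q) 1).2 (hasSum_pascalWeight k hq)
  simp only [Finset.sum_range_one, Nat.cast_zero, zero_mul, sub_zero, pascalWeight_zero]
    at hmean htotal
  refine ((hmean.mul_left a).add (htotal.mul_left b)).congr_fun fun n ↦ ?_
  push_cast
  ring

end PascalDistribution

theorem stmt18_general (m : ℕ) (hm : 1 ≤ m) (q : ℝ) (hq0 : 0 < q) (hq1 : q < 1)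
    (ξ ρ γ : ℝ) :
    ∑' n : ℕ,
      ((1 - ρ) * ((n : ℝ) + 1) * (Real.cos ξ)⁻¹ +
        (1 - γ) * (1 + ((n : ℝ) + 2) * ρ - ρ)) *
        ((n + m).choose (m - 1) : ℝ) * q ^ (n + 1) * (1 - q) ^ m
      = ((1 - ρ) * (Real.cos ξ)⁻¹ + ρ * (1 - γ)) * (q * m / (1 - q))
        + (1 - γ) * (1 - (1 - q) ^ m) := by
  obtain ⟨k, rfl⟩ : ∃ k, m = k + 1 := ⟨m - 1, by omega⟩
  have hq : ‖q‖ < 1 := by rw [Real.norm_eq_abs, abs_lt]; constructor <;> linarith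
  have h := hasSum_affine_mul_pascalWeight_succ k hq
    ((1 - ρ) * (Real.cos ξ)⁻¹ + ρ * (1 - γ)) (1 - γ)
  convert h.tsum_eq using 1
  · congr 1
    funext n
    rw [pascalWeight, Nat.add_sub_cancel, show n + (k + 1) = n + 1 + k by omega]
    ring
  · push_cast
    ring

/-- closed form of the weighted coefficient sum of `Θ_q^m`. -/
theorem stmt18 (m : ℕ) (hm : 1 ≤ m) (q : ℝ) (hq0 : 0 < q) (hq1 : q < 1)
    (ξ ρ γ : ℝ) (hξ : |ξ| < π / 2) (hρ0 : 0 ≤ ρ) (hρ1 : ρ < 1)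
    (hγ0 : 0 ≤ γ) (hγ1 : γ < 1) :
    ∑' n : ℕ,
      ((1 - ρ) * ((n : ℝ) + 1) * (Real.cos ξ)⁻¹ +
        (1 - γ) * (1 + ((n : ℝ) + 2) * ρ - ρ)) *
        ((n + m).choose (m - 1) : ℝ) * q ^ (n + 1) * (1 - q) ^ m
      = ((1 - ρ) * (Real.cos ξ)⁻¹ + ρ * (1 - γ)) * (q * m / (1 - q))
        + (1 - γ) * (1 - (1 - q) ^ m) :=
  stmt18_general m hm q hq0 hq1 ξ ρ γ
end
end
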